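/- Fix z₀ ∈ ℂ with Im z₀ > 0 and let λ ∈ ℂ. Set s⁺ := D(λ, conj z₀) / (2i·Im(z₀)·‖𝔭_{z₀}‖²), s⁻ := −D(λ, z₀) / (2i·Im(z₀)·‖𝔭_{z₀}‖²), r⁺ := C(λ, conj z₀) / (2i·Im(z₀)·‖𝔭_{z₀}‖²), and r⁻ := −C(λ, z₀) / (2i·Im(z₀)·‖𝔭_{z₀}‖²). Then 𝔭_λ − s⁺·𝔭_{z₀} − s⁻·𝔭_{conj z₀} ∈ D(T) and 𝔮_λ − r⁺·𝔭_{z₀} − r⁻·𝔭_{conj z₀} ∈ D(T). -/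

import Mathlib

open Filter Topology MeasureTheory

noncomputable section

/-- Action of the Jacobi matrix `J` on a complex sequence:
`(Jc)ₙ = aₙ₋₁cₙ₋₁ + bₙcₙ + aₙcₙ₊₁` with `a₋₁ := 0`. -/
def jacobiMul (a b : ℕ → ℝ) (c : ℕ → ℂ) : ℕ → ℂ
  | 0 => (b 0 : ℂ) * c 0 + (a 0 : ℂ) * c 1
  | n + 1 => (a n : ℂ) * c n + (b (n + 1) : ℂ) * c (n + 1) + (a (n + 1) : ℂ) * c (n + 2)

/-- `jacobiGraph a b f g` means: `f` belongs to the domain `D(T)` of the closure `T` of the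
Jacobi matrix acting on the finitely supported sequences, and `T f = g`; i.e. there are
finitely supported sequences `u k → f` in `ℓ²` such that `J (u k) → g` in `ℓ²`. -/
def jacobiGraph (a b : ℕ → ℝ) (f g : ℕ → ℂ) : Prop :=
  ∃ u : ℕ → ℕ → ℂ,
    (∀ k, (Function.support (u k)).Finite) ∧
    (∀ k, Summable fun n => ‖u k n - f n‖ ^ 2) ∧
    Tendsto (fun k => ∑' n, ‖u k n - f n‖ ^ 2) atTop (𝓝 0) ∧
    (∀ k, Summable fun n => ‖jacobiMul a b (u k) n - g n‖ ^ 2) ∧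
    Tendsto (fun k => ∑' n, ‖jacobiMul a b (u k) n - g n‖ ^ 2) atTop (𝓝 0)

/-- Membership in the domain `D(T)` of the Jacobi operator. -/
def inDomT (a b : ℕ → ℝ) (f : ℕ → ℂ) : Prop := ∃ g, jacobiGraph a b f g

/-- The `ℓ²` norm of a complex sequence. -/
def l2norm (f : ℕ → ℂ) : ℝ := Real.sqrt (∑' n, ‖f n‖ ^ 2)

/-- The data of an indeterminate Hamburger moment problem: Jacobi parameters `a`, `b`,
the orthonormal polynomials `p` and second-kind polynomials `q` (as entire functions),
determined by the three-term recurrence, together with the indeterminacy condition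
`∑ₙ (|pₙ(z)|² + |qₙ(z)|²) < ∞` for all `z`. -/
structure JacobiSetup where
  a : ℕ → ℝ
  b : ℕ → ℝ
  ha : ∀ n, 0 < a n
  p : ℕ → ℂ → ℂ
  q : ℕ → ℂ → ℂ
  hp0 : ∀ z, p 0 z = 1
  hp1 : ∀ z, p 1 z = (z - (b 0 : ℂ)) / (a 0 : ℂ)
  hq0 : ∀ z, q 0 z = 0
  hq1 : ∀ z, q 1 z = 1 / (a 0 : ℂ)
  hrecp : ∀ n z, z * p (n + 1) z =
    (a (n + 1) : ℂ) * p (n + 2) z + (b (n + 1) : ℂ) * p (n + 1) z + (a n : ℂ) * p n z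
  hrecq : ∀ n z, z * q (n + 1) z =
    (a (n + 1) : ℂ) * q (n + 2) z + (b (n + 1) : ℂ) * q (n + 1) z + (a n : ℂ) * q n z
  indet : ∀ z : ℂ, Summable fun n => ‖p n z‖ ^ 2 + ‖q n z‖ ^ 2

/-- The Nevanlinna function `A(u,v)`. -/
def nevA (S : JacobiSetup) (u v : ℂ) : ℂ := (u - v) * ∑' k, S.q k u * S.q k v
/-- The Nevanlinna function `B(u,v)`. -/
def nevB (S : JacobiSetup) (u v : ℂ) : ℂ := -1 + (u - v) * ∑' k, S.p k u * S.q k v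
/-- The Nevanlinna function `C(u,v)`. -/
def nevC (S : JacobiSetup) (u v : ℂ) : ℂ := 1 + (u - v) * ∑' k, S.q k u * S.p k v
/-- The Nevanlinna function `D(u,v)`. -/
def nevD (S : JacobiSetup) (u v : ℂ) : ℂ := (u - v) * ∑' k, S.p k u * S.p k v

/-!
For `x, y` in the maximal domain `D(T*) = {f ∈ ℓ² : Jf ∈ ℓ²}` let
`[x, y] = ∑ₙ (xₙ (Jy)ₙ - (Jx)ₙ yₙ)`. By Green's formula the partial sums of this series are the
Wronskians `a_M (x_M y_{M+1} - x_{M+1} y_M)`, i.e. `2 × 2` minors, so the Plücker relation passes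
to the limit: `[x, f] [φ, ψ] = [x, φ] [f, ψ] - [x, ψ] [f, φ]`. Hence if `[φ, ψ] ≠ 0` and
`[f, φ] = [f, ψ] = 0`, then `[v̄, f] = 0` for every `v ∈ D(T*)`. The orthogonal complement of the
graph of `J` on `ℱ` consists of the pairs `(-Jv, v)`, `v ∈ D(T*)`, so this says that `(f, Jf)` lies
in the closure of that graph, i.e. `f ∈ D(T)`.

Take `φ = 𝔭_{z₀}`, `ψ = 𝔭_{conj z₀}`. Since `J𝔭_u = u𝔭_u` and `J𝔮_u = u𝔮_u + e₀`, one finds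
`[𝔭_u, 𝔭_w] = -D(u, w)` and `[𝔮_u, 𝔭_w] = -C(u, w)`, while
`D(z₀, conj z₀) = 2i Im(z₀) ‖𝔭_{z₀}‖² ≠ 0`; the coefficients `s^±`, `r^±` are exactly the ones
that make both boundary forms vanish.
-/

open scoped lp ComplexConjugate

namespace JacobiOperator

variable {a b : ℕ → ℝ}

lemma jacobiMul_add (f g : ℕ → ℂ) :
    jacobiMul a b (f + g) = jacobiMul a b f + jacobiMul a b g := by
  funext n; cases n <;> simp only [jacobiMul, Pi.add_apply] <;> ring

lemma jacobiMul_sub (f g : ℕ → ℂ) :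
    jacobiMul a b (f - g) = jacobiMul a b f - jacobiMul a b g := by
  funext n; cases n <;> simp only [jacobiMul, Pi.sub_apply] <;> ring

lemma jacobiMul_smul (c : ℂ) (f : ℕ → ℂ) : jacobiMul a b (c • f) = c • jacobiMul a b f := by
  funext n; cases n <;> simp only [jacobiMul, Pi.smul_apply, smul_eq_mul] <;> ring

lemma jacobiMul_zero : jacobiMul a b 0 = 0 := by
  simpa using jacobiMul_smul (a := a) (b := b) 0 0

lemma jacobiMul_conj (f : ℕ → ℂ) (n : ℕ) :
    jacobiMul a b (fun m => conj (f m)) n = conj (jacobiMul a b f n) := by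
  cases n <;> simp [jacobiMul]

lemma jacobiMul_eq_zero_of_lt {x : ℕ → ℂ} {N : ℕ} (hx : ∀ n, N < n → x n = 0) {n : ℕ}
    (hn : N + 1 < n) : jacobiMul a b x n = 0 := by
  obtain ⟨m, rfl⟩ : ∃ m, n = m + 1 := ⟨n - 1, by omega⟩
  simp [jacobiMul, hx m (by omega), hx (m + 1) (by omega), hx (m + 2) (by omega)]

lemma support_jacobiMul_finite {x : ℕ → ℂ} (hx : x.support.Finite) :
    (jacobiMul a b x).support.Finite := by
  obtain ⟨N, hN⟩ := hx.bddAbove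
  refine (Set.finite_Iic (N + 1)).subset fun n hn => ?_
  by_contra h
  exact hn (jacobiMul_eq_zero_of_lt (fun m hm => Function.notMem_support.1 fun h' =>
    (hN h').not_gt hm) (by simpa using h))

def wronskian (a : ℕ → ℝ) (x y : ℕ → ℂ) (M : ℕ) : ℂ :=
  a M * (x M * y (M + 1) - x (M + 1) * y M)

lemma sum_range_green (x y : ℕ → ℂ) (M : ℕ) :
    ∑ n ∈ Finset.range (M + 1), (x n * jacobiMul a b y n - jacobiMul a b x n * y n) =
      wronskian a x y M := by
  induction M with
  | zero => simp [jacobiMul, wronskian]; ring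
  | succ M ih =>
    rw [Finset.sum_range_succ, ih]
    simp only [jacobiMul, wronskian]
    ring

lemma wronskian_mul_wronskian (x y u v : ℕ → ℂ) (M : ℕ) :
    wronskian a x y M * wronskian a u v M =
      wronskian a x u M * wronskian a y v M - wronskian a x v M * wronskian a y u M := by
  simp only [wronskian]; ring

lemma tsum_mul_jacobiMul_of_finite {x : ℕ → ℂ} (hx : x.support.Finite) (y : ℕ → ℂ) :
    ∑' n, x n * jacobiMul a b y n = ∑' n, jacobiMul a b x n * y n := by
  obtain ⟨N, hN⟩ := hx.bddAbove
  have hx0 : ∀ n, N < n → x n = 0 := fun n hn =>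
    Function.notMem_support.1 fun h => (hN h).not_gt hn
  have hsum := sum_range_green (a := a) (b := b) x y (N + 1)
  rw [Finset.sum_sub_distrib, wronskian, hx0 _ (by omega), hx0 _ (by omega)] at hsum
  rw [tsum_eq_sum (s := Finset.range (N + 2)), tsum_eq_sum (s := Finset.range (N + 2))]
  · linear_combination hsum
  · intro n hn
    rw [jacobiMul_eq_zero_of_lt hx0 (by simp at hn; omega), zero_mul]
  · intro n hn
    rw [hx0 n (by simp at hn; omega), zero_mul]

lemma support_single_one_finite (n : ℕ) : (Pi.single n 1 : ℕ → ℂ).support.Finite :=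
  (Set.finite_singleton n).subset Pi.support_single_subset

lemma tsum_single_one_mul (g : ℕ → ℂ) (n : ℕ) :
    ∑' m, (Pi.single n 1 : ℕ → ℂ) m * g m = g n := by
  rw [tsum_eq_single n] <;> simp +contextual

/-- `f` lies in the domain of the adjoint `T*`, the maximal Jacobi operator. -/
def MemMaxDomain (a b : ℕ → ℝ) (f : ℕ → ℂ) : Prop :=
  Memℓp f 2 ∧ Memℓp (jacobiMul a b f) 2

lemma memℓp_two_of_summable {f : ℕ → ℂ} (h : Summable fun n => ‖f n‖ ^ 2) : Memℓp f 2 :=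
  memℓp_gen (by simpa using h)

lemma memℓp_two_of_finite {f : ℕ → ℂ} (h : f.support.Finite) : Memℓp f 2 :=
  (memℓp_zero h).of_exponent_ge zero_le

lemma summable_mul_of_memℓp_two {x y : ℕ → ℂ} (hx : Memℓp x 2) (hy : Memℓp y 2) :
    Summable fun n => x n * y n :=
  .of_norm <| by
    simpa only [norm_mul] using lp.summable_mul (by simpa using Real.HolderConjugate.two_two)
      (⟨x, hx⟩ : ℓ²(ℕ, ℂ)) (⟨y, hy⟩ : ℓ²(ℕ, ℂ))

lemma hasSum_norm_sq (v : ℓ²(ℕ, ℂ)) : HasSum (fun n => ‖v n‖ ^ 2) (‖v‖ ^ 2) := by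
  simpa using lp.hasSum_norm (p := 2) (by norm_num) v

lemma MemMaxDomain.sub {f g : ℕ → ℂ} (hf : MemMaxDomain a b f) (hg : MemMaxDomain a b g) :
    MemMaxDomain a b (f - g) :=
  ⟨hf.1.sub hg.1, by rw [jacobiMul_sub]; exact hf.2.sub hg.2⟩

lemma MemMaxDomain.const_smul {f : ℕ → ℂ} (hf : MemMaxDomain a b f) (c : ℂ) :
    MemMaxDomain a b (c • f) :=
  ⟨hf.1.const_smul c, by rw [jacobiMul_smul]; exact hf.2.const_smul c⟩

/-- The boundary form `⟨x̄, T* y⟩ - ⟨T* x̄, y⟩` of the maximal operator, written bilinearly. -/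
def boundaryForm (a b : ℕ → ℝ) (x y : ℕ → ℂ) : ℂ :=
  ∑' n, (x n * jacobiMul a b y n - jacobiMul a b x n * y n)

section BoundaryForm

variable {x y u v : ℕ → ℂ}

lemma summable_boundaryForm (hx : MemMaxDomain a b x) (hy : MemMaxDomain a b y) :
    Summable fun n => x n * jacobiMul a b y n - jacobiMul a b x n * y n :=
  (summable_mul_of_memℓp_two hx.1 hy.2).sub (summable_mul_of_memℓp_two hx.2 hy.1)

lemma tendsto_wronskian (hx : MemMaxDomain a b x) (hy : MemMaxDomain a b y) :
    Tendsto (wronskian a x y) atTop (𝓝 (boundaryForm a b x y)) := by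
  have h := (summable_boundaryForm hx hy).hasSum.tendsto_sum_nat.comp (tendsto_add_atTop_nat 1)
  exact h.congr fun M => sum_range_green x y M

lemma boundaryForm_mul_boundaryForm (hx : MemMaxDomain a b x) (hy : MemMaxDomain a b y)
    (hu : MemMaxDomain a b u) (hv : MemMaxDomain a b v) :
    boundaryForm a b x y * boundaryForm a b u v =
      boundaryForm a b x u * boundaryForm a b y v - boundaryForm a b x v * boundaryForm a b y u :=
  tendsto_nhds_unique (((tendsto_wronskian hx hy).mul (tendsto_wronskian hu hv)).congr
      fun M => wronskian_mul_wronskian x y u v M)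
    (((tendsto_wronskian hx hu).mul (tendsto_wronskian hy hv)).sub
      ((tendsto_wronskian hx hv).mul (tendsto_wronskian hy hu)))

lemma boundaryForm_sub_left (hx : MemMaxDomain a b x) (hu : MemMaxDomain a b u)
    (hy : MemMaxDomain a b y) :
    boundaryForm a b (x - u) y = boundaryForm a b x y - boundaryForm a b u y := by
  rw [boundaryForm, boundaryForm, boundaryForm, jacobiMul_sub,
    ← (summable_boundaryForm hx hy).tsum_sub (summable_boundaryForm hu hy)]
  congr 1; funext n; simp only [Pi.sub_apply]; ring

lemma boundaryForm_smul_left (c : ℂ) (x y : ℕ → ℂ) :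
    boundaryForm a b (c • x) y = c * boundaryForm a b x y := by
  rw [boundaryForm, boundaryForm, jacobiMul_smul, ← tsum_mul_left]
  congr 1; funext n; simp only [Pi.smul_apply, smul_eq_mul]; ring

lemma boundaryForm_swap (x y : ℕ → ℂ) : boundaryForm a b y x = -boundaryForm a b x y := by
  rw [boundaryForm, boundaryForm, ← tsum_neg]
  congr 1; funext n; ring

lemma boundaryForm_self (x : ℕ → ℂ) : boundaryForm a b x x = 0 := by
  simp [boundaryForm, mul_comm]

end BoundaryForm

def finsuppGraph (a b : ℕ → ℝ) : Submodule ℂ (WithLp 2 (ℓ²(ℕ, ℂ) × ℓ²(ℕ, ℂ))) where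
  carrier := {x | ∃ c : ℕ → ℂ, c.support.Finite ∧ ⇑x.fst = c ∧ ⇑x.snd = jacobiMul a b c}
  add_mem' := by
    rintro x y ⟨c, hc, hxc, hxJ⟩ ⟨d, hd, hyd, hyJ⟩
    refine ⟨c + d, (hc.union hd).subset (Function.support_add c d), ?_, ?_⟩
    · rw [WithLp.add_fst, lp.coeFn_add, hxc, hyd]
    · rw [WithLp.add_snd, lp.coeFn_add, hxJ, hyJ, jacobiMul_add]
  zero_mem' := ⟨0, by simp, rfl, by rw [jacobiMul_zero]; rfl⟩
  smul_mem' := by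
    rintro s x ⟨c, hc, hxc, hxJ⟩
    refine ⟨s • c, hc.subset (Function.support_const_smul_subset s c), ?_, ?_⟩
    · rw [WithLp.smul_fst, lp.coeFn_smul, hxc]
    · rw [WithLp.smul_snd, lp.coeFn_smul, hxJ, jacobiMul_smul]

lemma fst_eq_neg_jacobiMul_of_mem_orthogonal {x : WithLp 2 (ℓ²(ℕ, ℂ) × ℓ²(ℕ, ℂ))}
    (hx : x ∈ (finsuppGraph a b)ᗮ) : ⇑x.fst = -jacobiMul a b x.snd := by
  funext n
  have he := support_single_one_finite n
  have hmem : WithLp.toLp 2 (lp.single 2 n 1,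
      (⟨_, memℓp_two_of_finite (support_jacobiMul_finite (a := a) (b := b) he)⟩ : ℓ²(ℕ, ℂ)))
      ∈ finsuppGraph a b :=
    ⟨_, he, lp.coeFn_single _ _ _, rfl⟩
  have h := (Submodule.mem_orthogonal _ _).1 hx _ hmem
  have hconj (m : ℕ) : conj ((Pi.single n 1 : ℕ → ℂ) m) = (Pi.single n 1 : ℕ → ℂ) m := by
    simp [Pi.single_apply, apply_ite]
  simp only [WithLp.prod_inner_apply, WithLp.ofLp_fst, WithLp.ofLp_snd, lp.inner_eq_tsum,
    RCLike.inner_apply', lp.coeFn_single, ← jacobiMul_conj, hconj] at h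
  rw [tsum_single_one_mul, ← tsum_mul_jacobiMul_of_finite he, tsum_single_one_mul] at h
  rw [Pi.neg_apply, eq_neg_iff_add_eq_zero, h]

lemma toLp_mem_topologicalClosure_finsuppGraph {f : ℕ → ℂ} (hf : MemMaxDomain a b f)
    (hbdry : ∀ v, MemMaxDomain a b v → boundaryForm a b v f = 0) :
    WithLp.toLp 2 ((⟨f, hf.1⟩ : ℓ²(ℕ, ℂ)), (⟨_, hf.2⟩ : ℓ²(ℕ, ℂ))) ∈
      (finsuppGraph a b).topologicalClosure := by
  rw [← Submodule.orthogonal_orthogonal_eq_closure, Submodule.mem_orthogonal]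
  intro x hx
  have hfst := fst_eq_neg_jacobiMul_of_mem_orthogonal hx
  set v : ℕ → ℂ := fun n => conj (x.snd n)
  have hJv : jacobiMul a b v = fun n => -conj (x.fst n) := by
    funext n; simp [v, jacobiMul_conj, hfst]
  have hv : MemMaxDomain a b v :=
    ⟨(lp.memℓp x.snd).mono' (by simp [v]), hJv ▸ (lp.memℓp x.fst).mono' (by simp)⟩
  rw [WithLp.prod_inner_apply, lp.inner_eq_tsum, lp.inner_eq_tsum,
    ← (lp.summable_inner _ _).tsum_add (lp.summable_inner _ _), ← hbdry v hv, boundaryForm, hJv]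
  congr 1; funext n
  simp only [RCLike.inner_apply', WithLp.ofLp_fst, WithLp.ofLp_snd]
  ring

lemma summable_norm_sub_sq (u v : ℓ²(ℕ, ℂ)) : Summable fun n => ‖u n - v n‖ ^ 2 := by
  simpa using (hasSum_norm_sq (u - v)).summable

lemma tendsto_tsum_norm_sub_sq {x : ℕ → ℓ²(ℕ, ℂ)} {v : ℓ²(ℕ, ℂ)} (hx : Tendsto x atTop (𝓝 v)) :
    Tendsto (fun k => ∑' n, ‖x k n - v n‖ ^ 2) atTop (𝓝 0) := by
  have h : Tendsto (fun k => ‖x k - v‖ ^ 2) atTop (𝓝 0) := by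
    simpa using (tendsto_iff_norm_sub_tendsto_zero.1 hx).pow 2
  exact h.congr fun k => by simpa using (hasSum_norm_sq (x k - v)).tsum_eq.symm

lemma jacobiGraph_of_mem_topologicalClosure {f g : ℕ → ℂ} (hf : Memℓp f 2) (hg : Memℓp g 2)
    (h : WithLp.toLp 2 ((⟨f, hf⟩ : ℓ²(ℕ, ℂ)), (⟨g, hg⟩ : ℓ²(ℕ, ℂ))) ∈
      (finsuppGraph a b).topologicalClosure) :
    jacobiGraph a b f g := by
  rw [← SetLike.mem_coe, Submodule.topologicalClosure_coe] at h
  obtain ⟨x, hxG, hx⟩ := mem_closure_iff_seq_limit.1 h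
  choose c hc hfst hsnd using hxG
  refine ⟨c, hc, fun k => ?_, ?_, fun k => ?_, ?_⟩
  · simpa [← hfst k] using summable_norm_sub_sq (x k).fst ⟨f, hf⟩
  · simpa [← hfst] using
      tendsto_tsum_norm_sub_sq (((WithLp.continuous_fst 2 _ _).tendsto _).comp hx)
  · simpa [← hsnd k] using summable_norm_sub_sq (x k).snd ⟨g, hg⟩
  · simpa [← hsnd] using
      tendsto_tsum_norm_sub_sq (((WithLp.continuous_snd 2 _ _).tendsto _).comp hx)

theorem inDomT_of_boundaryForm_eq_zero {f φ ψ : ℕ → ℂ} (hf : MemMaxDomain a b f)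
    (hφ : MemMaxDomain a b φ) (hψ : MemMaxDomain a b ψ) (hφψ : boundaryForm a b φ ψ ≠ 0)
    (hfφ : boundaryForm a b f φ = 0) (hfψ : boundaryForm a b f ψ = 0) : inDomT a b f := by
  refine ⟨_, jacobiGraph_of_mem_topologicalClosure hf.1 hf.2
    (toLp_mem_topologicalClosure_finsuppGraph hf fun v hv => ?_)⟩
  have h := boundaryForm_mul_boundaryForm hv hf hφ hψ
  rw [hfφ, hfψ, mul_zero, mul_zero, sub_zero] at h
  exact (mul_eq_zero.1 h).resolve_right hφψ

end JacobiOperator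

namespace JacobiSetup

open JacobiOperator

variable (S : JacobiSetup)

lemma a_ne_zero (n : ℕ) : (S.a n : ℂ) ≠ 0 := Complex.ofReal_ne_zero.2 (S.ha n).ne'

lemma p_conj (z : ℂ) (n : ℕ) : S.p n (conj z) = conj (S.p n z) := by
  induction n using Nat.twoStepInduction with
  | zero => simp [S.hp0]
  | one => simp [S.hp1, map_div₀]
  | more n ih₀ ih₁ =>
    apply mul_left_cancel₀ (S.a_ne_zero (n + 1))
    have h := S.hrecp n (conj z)
    have h' := congrArg conj (S.hrecp n z)
    simp only [map_add, map_mul, Complex.conj_ofReal, ih₀, ih₁] at h h'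
    linear_combination h' - h

lemma jacobiMul_p (z : ℂ) : jacobiMul S.a S.b (S.p · z) = z • (S.p · z) := by
  funext n
  cases n with
  | zero =>
    simp only [jacobiMul, Pi.smul_apply, smul_eq_mul, S.hp0, S.hp1]
    field_simp [S.a_ne_zero 0]
    ring
  | succ n =>
    simp only [jacobiMul, Pi.smul_apply, smul_eq_mul]
    linear_combination (S.hrecp n z).symm

lemma jacobiMul_q (z : ℂ) :
    jacobiMul S.a S.b (S.q · z) = z • (S.q · z) + Pi.single 0 1 := by
  funext n
  cases n with
  | zero =>
    simp only [jacobiMul, Pi.add_apply, Pi.smul_apply, smul_eq_mul, S.hq0, S.hq1,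
      Pi.single_eq_same]
    field_simp [S.a_ne_zero 0]
    ring
  | succ n =>
    simp only [jacobiMul, Pi.add_apply, Pi.smul_apply, smul_eq_mul]
    rw [Pi.single_eq_of_ne (Nat.succ_ne_zero n)]
    linear_combination (S.hrecq n z).symm

lemma summable_norm_p_sq (z : ℂ) : Summable fun n => ‖S.p n z‖ ^ 2 :=
  (S.indet z).of_nonneg_of_le (fun _ => by positivity)
    fun _ => le_add_of_nonneg_right (by positivity)

lemma summable_norm_q_sq (z : ℂ) : Summable fun n => ‖S.q n z‖ ^ 2 :=
  (S.indet z).of_nonneg_of_le (fun _ => by positivity)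
    fun _ => le_add_of_nonneg_left (by positivity)

lemma memMaxDomain_p (z : ℂ) : MemMaxDomain S.a S.b (S.p · z) := by
  have h := memℓp_two_of_summable (S.summable_norm_p_sq z)
  exact ⟨h, S.jacobiMul_p z ▸ h.const_smul z⟩

lemma memMaxDomain_q (z : ℂ) : MemMaxDomain S.a S.b (S.q · z) := by
  have h := memℓp_two_of_summable (S.summable_norm_q_sq z)
  exact ⟨h, S.jacobiMul_q z ▸
    (h.const_smul z).add (memℓp_two_of_finite (support_single_one_finite 0))⟩

lemma boundaryForm_p_p (u w : ℂ) : boundaryForm S.a S.b (S.p · u) (S.p · w) = -nevD S u w := by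
  rw [boundaryForm, S.jacobiMul_p, S.jacobiMul_p, nevD, ← tsum_mul_left, ← tsum_neg]
  congr 1; funext n
  simp only [Pi.smul_apply, smul_eq_mul]
  ring

lemma boundaryForm_q_p (u w : ℂ) : boundaryForm S.a S.b (S.q · u) (S.p · w) = -nevC S u w := by
  have hqp := summable_mul_of_memℓp_two (S.memMaxDomain_q u).1 (S.memMaxDomain_p w).1
  have hsingle := summable_mul_of_memℓp_two (memℓp_two_of_finite (support_single_one_finite 0))
    (S.memMaxDomain_p w).1
  calc boundaryForm S.a S.b (S.q · u) (S.p · w)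
      = ∑' n, ((w - u) * (S.q n u * S.p n w) - (Pi.single 0 1 : ℕ → ℂ) n * S.p n w) := by
        rw [boundaryForm, S.jacobiMul_p, S.jacobiMul_q]
        congr 1; funext n
        simp only [Pi.add_apply, Pi.smul_apply, smul_eq_mul]
        ring
    _ = -nevC S u w := by
        rw [(hqp.mul_left _).tsum_sub hsingle, tsum_mul_left, tsum_single_one_mul, S.hp0, nevC]
        ring

lemma nevD_conj (z : ℂ) : nevD S z (conj z) =
    2 * Complex.I * (z.im : ℂ) * ((l2norm fun m => S.p m z : ℝ) : ℂ) ^ 2 := by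
  rw [nevD, Complex.sub_conj, l2norm, ← Complex.ofReal_pow,
    Real.sq_sqrt (tsum_nonneg fun n => by positivity), Complex.ofReal_tsum]
  simp_rw [S.p_conj, Complex.mul_conj']
  push_cast
  ring

lemma nevD_conj_ne_zero {z : ℂ} (hz : z.im ≠ 0) : nevD S z (conj z) ≠ 0 := by
  have hpos : 0 < ∑' n, ‖S.p n z‖ ^ 2 :=
    one_pos.trans_le (by simpa [S.hp0] using
      (S.summable_norm_p_sq z).le_tsum 0 fun _ _ => by positivity)
  rw [nevD_conj, l2norm]
  simp [hz, Complex.I_ne_zero, hpos, Real.sqrt_eq_zero']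

theorem inDomT_sub_smul_p_sub_smul_p {g : ℕ → ℂ} (hg : MemMaxDomain S.a S.b g) (F : ℂ → ℂ)
    (hF : ∀ w, boundaryForm S.a S.b g (S.p · w) = -F w) {z : ℂ} (hz : z.im ≠ 0) :
    inDomT S.a S.b fun n => g n - (F (conj z) / nevD S z (conj z)) * S.p n z
      - (-F z / nevD S z (conj z)) * S.p n (conj z) := by
  set d := nevD S z (conj z)
  have hd : d ≠ 0 := S.nevD_conj_ne_zero hz
  have hφψ : boundaryForm S.a S.b (S.p · z) (S.p · (conj z)) = -d := S.boundaryForm_p_p z (conj z)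
  have hφ := S.memMaxDomain_p z
  have hψ := S.memMaxDomain_p (conj z)
  have hg' := hg.sub (hφ.const_smul (F (conj z) / d))
  show inDomT S.a S.b (g - (F (conj z) / d) • (S.p · z) - (-F z / d) • (S.p · (conj z)))
  refine inDomT_of_boundaryForm_eq_zero (hg'.sub (hψ.const_smul _)) hφ hψ
    (by rw [hφψ]; exact neg_ne_zero.2 hd) ?_ ?_
  · rw [boundaryForm_sub_left hg' (hψ.const_smul _) hφ,
      boundaryForm_sub_left hg (hφ.const_smul _) hφ, boundaryForm_smul_left,
      boundaryForm_smul_left, hF, boundaryForm_self, boundaryForm_swap, hφψ]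
    field_simp
    ring
  · rw [boundaryForm_sub_left hg' (hψ.const_smul _) hψ,
      boundaryForm_sub_left hg (hφ.const_smul _) hψ, boundaryForm_smul_left,
      boundaryForm_smul_left, hF, boundaryForm_self, hφψ]
    field_simp
    ring

end JacobiSetup

/-- For `z₀` in the open upper half-plane and `λ ∈ ℂ`, subtracting the indicated multiples
of `𝔭_{z₀}` and `𝔭_{conj z₀}` from `𝔭_λ` (resp. `𝔮_λ`) produces elements of `D(T)`. -/
theorem stmt7 (S : JacobiSetup) (z₀ : ℂ) (hz₀ : 0 < z₀.im) (lam : ℂ)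
    (den : ℂ)
    (hden : den = 2 * Complex.I * (z₀.im : ℂ) * ((l2norm fun m => S.p m z₀ : ℝ) : ℂ) ^ 2) :
    (inDomT S.a S.b fun n =>
      S.p n lam - (nevD S lam (starRingEnd ℂ z₀) / den) * S.p n z₀
        - (-nevD S lam z₀ / den) * S.p n (starRingEnd ℂ z₀)) ∧
    (inDomT S.a S.b fun n =>
      S.q n lam - (nevC S lam (starRingEnd ℂ z₀) / den) * S.p n z₀
        - (-nevC S lam z₀ / den) * S.p n (starRingEnd ℂ z₀)) := by
  rw [hden, ← S.nevD_conj]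
  exact ⟨S.inDomT_sub_smul_p_sub_smul_p (S.memMaxDomain_p lam) _ (S.boundaryForm_p_p lam)
      hz₀.ne',
    S.inDomT_sub_smul_p_sub_smul_p (S.memMaxDomain_q lam) _ (S.boundaryForm_q_p lam) hz₀.ne'⟩
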